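/- Let R ⊆ ℕ^n be a finite set satisfying the monomial condition and let p ∈ ℕ. Then (L_R)^p ≡ I (mod p): for all k, k' ∈ R, the integer p divides ((L_R)^p)_{k,k'} − δ_{k,k'}, where δ_{k,k'} = 1 if k = k' and 0 otherwise. -/

import Mathlib

/-!
The matrix `L_R` acts on monomials indexed by `R` as the substitution `x ↦ x + 1`, so `L_R ^ m`
should act as `x ↦ x + m`, i.e. `(L_R ^ m)_{a,b} = ∏ⱼ C(aⱼ, bⱼ) m^(aⱼ - bⱼ)`. Entrywise, the
inductive step is the identity `∑_c C(a,c) C(c,b) m^(c-b) = C(a,b) (m+1)^(a-b)` in each coordinate;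
the sum over `c ∈ R` factorises into these because `C(a,c) = 0` unless `c ≤ a`, and `R`, being a
lower set, contains the whole box below `a`. For `m = p`, every off-diagonal entry has a factor
that vanishes or is a positive power of `p`.
-/

open Finset

theorem sum_choose_mul_choose_mul_pow {S : Type*} [CommSemiring S] (a b : ℕ) (x : S) :
    ∑ c ∈ range (a + 1), (a.choose c * c.choose b : S) * x ^ (c - b) =
      a.choose b * (x + 1) ^ (a - b) := by
  rcases lt_or_ge a b with hab | hba
  · rw [Nat.choose_eq_zero_of_lt hab, Nat.cast_zero, zero_mul]
    refine sum_eq_zero fun c hc => ?_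
    rw [Nat.choose_eq_zero_of_lt (by grind : c < b)]
    simp
  have below : ∑ c ∈ range b, (a.choose c * c.choose b : S) * x ^ (c - b) = 0 :=
    sum_eq_zero fun c hc => by simp [Nat.choose_eq_zero_of_lt (mem_range.mp hc)]
  rw [← sum_range_add_sum_Ico _ (by omega : b ≤ a + 1), below, zero_add,
    sum_Ico_eq_sum_range, add_pow, mul_sum, (by omega : a + 1 - b = a - b + 1)]
  refine sum_congr rfl fun d _ => ?_
  rw [← Nat.cast_mul, Nat.choose_mul (Nat.le_add_right b d)]
  simp only [Nat.add_sub_cancel_left, one_pow, mul_one, Nat.cast_mul]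
  ring

theorem dvd_choose_mul_pow_sub {S : Type*} [CommSemiring S] (x : S) {a b : ℕ} (h : a ≠ b) :
    x ∣ (a.choose b : S) * x ^ (a - b) := by
  rcases lt_or_gt_of_ne h with hab | hba
  · simp [Nat.choose_eq_zero_of_lt hab]
  · exact Dvd.dvd.mul_left (dvd_pow_self x (by omega)) _

variable {ι S : Type*} [Fintype ι] [CommSemiring S]

theorem dvd_prod_choose_mul_pow_sub (x : S) {a b : ι → ℕ} (h : a ≠ b) :
    x ∣ ∏ j, ((a j).choose (b j) : S) * x ^ (a j - b j) :=
  let ⟨j, hj⟩ := Function.ne_iff.mp h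
  (dvd_choose_mul_pow_sub x hj).trans (dvd_prod_of_mem _ (mem_univ j))

theorem sum_isLowerSet_prod_choose_mul {R : Finset (ι → ℕ)}
    (hR : IsLowerSet (R : Set (ι → ℕ))) {a : ι → ℕ} (ha : a ∈ R) (h : ι → ℕ → S) :
    ∑ c ∈ R, ∏ j, ((a j).choose (c j) : S) * h j (c j) =
      ∏ j, ∑ t ∈ range (a j + 1), ((a j).choose t : S) * h j t := by
  classical
  rw [prod_univ_sum]
  refine (sum_subset (fun c hc => hR (fun j => ?_) ha) fun c _ hc => ?_).symm
  · exact Nat.lt_add_one_iff.mp (mem_range.mp (Fintype.mem_piFinset.mp hc j))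
  · obtain ⟨j, hj⟩ : ∃ j, a j < c j := by
      simpa [Fintype.mem_piFinset, Nat.lt_add_one_iff] using hc
    exact prod_eq_zero (mem_univ j) (by simp [Nat.choose_eq_zero_of_lt hj])

variable (S) in
def binomialMatrix (R : Finset (ι → ℕ)) : Matrix R R S :=
  Matrix.of fun a b => ((∏ j, (a.1 j).choose (b.1 j) : ℕ) : S)

theorem binomialMatrix_pow_apply {R : Finset (ι → ℕ)} (hR : IsLowerSet (R : Set (ι → ℕ)))
    (m : ℕ) (a b : R) :
    (binomialMatrix S R ^ m) a b =
      ∏ j, ((a.1 j).choose (b.1 j) : S) * (m : S) ^ (a.1 j - b.1 j) := by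
  induction m generalizing a with
  | zero =>
    by_cases hab : a = b
    · subst hab
      simp
    -- off the diagonal, the `x = 0` case of divisibility by `x` says the entry vanishes
    · rw [pow_zero, Matrix.one_apply_ne hab, Nat.cast_zero, eq_comm, ← zero_dvd_iff]
      exact dvd_prod_choose_mul_pow_sub 0 (mt Subtype.ext hab)
  | succ m ih =>
    calc (binomialMatrix S R ^ (m + 1)) a b
        = ∑ c ∈ R, ∏ j, ((a.1 j).choose (c j) : S) *
            ((c j).choose (b.1 j) * (m : S) ^ (c j - b.1 j)) := by
          rw [pow_succ', Matrix.mul_apply, ← sum_coe_sort R]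
          refine sum_congr rfl fun c _ => ?_
          rw [ih, binomialMatrix, Matrix.of_apply, Nat.cast_prod, ← prod_mul_distrib]
      _ = ∏ j, ((a.1 j).choose (b.1 j) : S) * ((m + 1 : ℕ) : S) ^ (a.1 j - b.1 j) := by
          rw [sum_isLowerSet_prod_choose_mul hR a.2
            (fun j t => ((t.choose (b.1 j) : ℕ) : S) * (m : S) ^ (t - b.1 j))]
          simp only [← mul_assoc, sum_choose_mul_choose_mul_pow, Nat.cast_succ]

/-- If the finite `R ⊆ ℕ^n` satisfies the monomial condition and `p ∈ ℕ`, then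
`(L_R)^p ≡ I (mod p)`: `p` divides every entry of `(L_R)^p - I`. -/
theorem stmt12 (n : ℕ) (R : Finset (Fin n → ℕ))
    (hR : ∀ k ∈ R, ∀ i : Fin n → ℕ, (∀ j, i j ≤ k j) → i ∈ R) (p : ℕ) (k k' : R) :
    (p : ℤ) ∣
      ((Matrix.of fun a b : R => ((∏ j, (a.1 j).choose (b.1 j) : ℕ) : ℤ)) ^ p) k k' -
        (if k = k' then 1 else 0) := by
  have hR' : IsLowerSet (R : Set (Fin n → ℕ)) := fun a b hba ha => hR a ha b hba
  show (p : ℤ) ∣ (binomialMatrix ℤ R ^ p) k k' - (if k = k' then 1 else 0)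
  rw [binomialMatrix_pow_apply hR']
  by_cases hkk : k = k'
  · subst hkk
    simp
  · rw [if_neg hkk, sub_zero]
    exact dvd_prod_choose_mul_pow_sub _ (mt Subtype.ext hkk)
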